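/- arXiv:2406.18670 — 2 statements merged into one kernel-verified Lean document; each statement's English description precedes it below -/
import Mathlib

section
/- If there exists a β-certificate for (W, Z), then (W, Z) is a β-pairing. Precisely: under the conic assumptions, let β ∈ (0,1), W ∈ K, Z ∈ K*, and suppose (ρ, μ, U, y, x) is a β-certificate for (W, Z). Then the same ρ and μ witness that (W, Z) is a β-pairing, i.e., ⟨W,Z⟩ = ρμ and βρμ ≤ maxq(W)·μ ≤ ρμ ≤ ρ·fevc(Z) ≤ (1/β)·ρμ. -/
open Matrix Finset

noncomputable section

/-- The trace inner product `⟨X,Y⟩ = tr(XY)` on symmetric matrices. -/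
def ip {n : ℕ} (X Y : Matrix (Fin n) (Fin n) ℝ) : ℝ := (X * Y).trace

/-- The signed incidence vector `s_U ∈ {±1}ⁿ` of `U ⊆ [n]`. -/
def sgn {n : ℕ} (U : Finset (Fin n)) : Fin n → ℝ := fun i => if i ∈ U then 1 else -1

/-- The rank-one sign matrix `s_U s_Uᵀ`. -/
def stensor {n : ℕ} (U : Finset (Fin n)) : Matrix (Fin n) (Fin n) ℝ :=
  fun i j => sgn U i * sgn U j

/-- The quadratic form `vᵀ W v`. -/
def qform {n : ℕ} (W : Matrix (Fin n) (Fin n) ℝ) (v : Fin n → ℝ) : ℝ :=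
  ∑ i, ∑ j, v i * W i j * v j

/-- The dual cone (within the space `Sym(n)` of symmetric matrices) of a set `S ⊆ Sym(n)`. -/
def dualSet {n : ℕ} (S : Set (Matrix (Fin n) (Fin n) ℝ)) : Set (Matrix (Fin n) (Fin n) ℝ) :=
  {X | X.IsSymm ∧ ∀ Y ∈ S, 0 ≤ ip X Y}

/-- The data of the conic framework: closed convex cones `A`, `K̂` of symmetric matrices,
and a linear map `L`. -/
structure ConicSetting (n k : ℕ) where
  A : Set (Matrix (Fin n) (Fin n) ℝ)
  Khat : Set (Matrix (Fin n) (Fin n) ℝ)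
  L : Matrix (Fin n) (Fin n) ℝ →ₗ[ℝ] (Fin k → ℝ)
  A_symm : ∀ X ∈ A, X.IsSymm
  A_closed : IsClosed A
  A_smul : ∀ c : ℝ, 0 ≤ c → ∀ X ∈ A, c • X ∈ A
  A_add : ∀ X ∈ A, ∀ Y ∈ A, X + Y ∈ A
  Khat_symm : ∀ X ∈ Khat, X.IsSymm
  Khat_closed : IsClosed Khat
  Khat_smul : ∀ c : ℝ, 0 ≤ c → ∀ X ∈ Khat, c • X ∈ Khat
  Khat_add : ∀ X ∈ Khat, ∀ Y ∈ Khat, X + Y ∈ Khat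

namespace ConicSetting

variable {n k : ℕ} (S : ConicSetting n k)

/-- `K := K̂ ∩ ker L`. -/
def K : Set (Matrix (Fin n) (Fin n) ℝ) := {X | X ∈ S.Khat ∧ S.L X = 0}

/-- `F(A) := {U ⊆ [n] : s_U s_Uᵀ ∈ A}`. -/
def FA : Set (Finset (Fin n)) := {U | stensor U ∈ S.A}

/-- The range of the adjoint of `L` restricted to `Sym(n)`, i.e. the orthogonal complement
of `ker L ∩ Sym(n)` inside `Sym(n)`. -/
def rangeLstar : Set (Matrix (Fin n) (Fin n) ℝ) :=
  {Q | Q.IsSymm ∧ ∀ Y : Matrix (Fin n) (Fin n) ℝ, Y.IsSymm → S.L Y = 0 → ip Q Y = 0}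

/-- `lift := K̂* + range(L*)`. -/
def lift : Set (Matrix (Fin n) (Fin n) ℝ) :=
  {X | ∃ P ∈ dualSet S.Khat, ∃ Q ∈ S.rangeLstar, X = P + Q}

/-- `K* := {X ∈ ker L : ⟨X,Y⟩ ≥ 0 for all Y ∈ K}` (within `Sym(n)`). -/
def Kstar : Set (Matrix (Fin n) (Fin n) ℝ) :=
  {X | X.IsSymm ∧ S.L X = 0 ∧ ∀ Y ∈ S.K, 0 ≤ ip X Y}

/-- The convex cone generated by `CUT^A = conv{s_U s_Uᵀ : U ∈ F(A)}`. -/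
def coneCUT : Set (Matrix (Fin n) (Fin n) ℝ) :=
  {X | ∃ y : Finset (Fin n) → ℝ, (∀ U, 0 ≤ y U) ∧ (∀ U, U ∉ S.FA → y U = 0) ∧
    X = ∑ U : Finset (Fin n), y U • stensor U}

/-- The conic assumptions: `A ⊆ PSD(n)`, `K ⊆ A*`, `cone(CUT^A)` has nonempty interior in
`Sym(n)`, and `K̂` has a nonzero Slater point in `ker L` (interior taken in `Sym(n)`). -/
structure Assumptions : Prop where
  A_psd : ∀ X ∈ S.A, X.PosSemidef
  K_sub_Astar : S.K ⊆ dualSet S.A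
  cut_interior : (interior {X : {M : Matrix (Fin n) (Fin n) ℝ // M.IsSymm} |
      (X : Matrix (Fin n) (Fin n) ℝ) ∈ S.coneCUT}).Nonempty
  Khat_slater : ∃ X : {M : Matrix (Fin n) (Fin n) ℝ // M.IsSymm},
      (X : Matrix (Fin n) (Fin n) ℝ) ≠ 0 ∧
      X ∈ interior {M : {M : Matrix (Fin n) (Fin n) ℝ // M.IsSymm} |
        (M : Matrix (Fin n) (Fin n) ℝ) ∈ S.Khat} ∧
      S.L X = 0

/-- `maxq(W) := max{s_Uᵀ W s_U : U ∈ F(A)}`. -/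
def maxq (W : Matrix (Fin n) (Fin n) ℝ) : ℝ :=
  sSup {r | ∃ U ∈ S.FA, r = qform W (sgn U)}

/-- `ν(W) := max{⟨W,Y⟩ : Y ∈ A, diag(Y) = 1}`. -/
def nu (W : Matrix (Fin n) (Fin n) ℝ) : ℝ :=
  sSup {r | ∃ Y ∈ S.A, (∀ i, Y i i = 1) ∧ r = ip W Y}

/-- `y ∈ ℝ₊^{F(A)}` is a tensor sign cover for `Z`:
`∑_{U ∈ F(A)} y_U s_U s_Uᵀ ⪰_lift Z`. -/
def CoverFeas (Z : Matrix (Fin n) (Fin n) ℝ) (y : Finset (Fin n) → ℝ) : Prop :=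
  (∀ U, 0 ≤ y U) ∧ (∀ U, U ∉ S.FA → y U = 0) ∧
  (∑ U : Finset (Fin n), y U • stensor U) - Z ∈ S.lift

/-- `fevc(Z)`: minimum total weight of a tensor sign cover of `Z`. -/
def fevc (Z : Matrix (Fin n) (Fin n) ℝ) : ℝ :=
  sInf {r | ∃ y, S.CoverFeas Z y ∧ r = ∑ U : Finset (Fin n), y U}

/-- `ν°(Z) := inf{μ ≥ 0 : ∃ Y ∈ A, diag(Y) = μ·1, Y ⪰_lift Z}`. -/
def nuPolar (Z : Matrix (Fin n) (Fin n) ℝ) : ℝ :=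
  sInf {μ | 0 ≤ μ ∧ ∃ Y ∈ S.A, (∀ i, Y i i = μ) ∧ Y - Z ∈ S.lift}

end ConicSetting

section Aux

variable {n : ℕ}

lemma ip_comm (X Y : Matrix (Fin n) (Fin n) ℝ) : ip X Y = ip Y X :=
  Matrix.trace_mul_comm X Y

lemma ip_sub_left (X Y Z : Matrix (Fin n) (Fin n) ℝ) :
    ip (X - Y) Z = ip X Z - ip Y Z := by
  simp [ip, Matrix.sub_mul]

lemma ip_add_left (X Y Z : Matrix (Fin n) (Fin n) ℝ) :
    ip (X + Y) Z = ip X Z + ip Y Z := by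
  simp [ip, Matrix.add_mul]

lemma ip_smul_left (c : ℝ) (X Y : Matrix (Fin n) (Fin n) ℝ) :
    ip (c • X) Y = c * ip X Y := by
  simp [ip, Matrix.smul_mul]

lemma ip_sum_left {ι : Type*} (s : Finset ι) (f : ι → Matrix (Fin n) (Fin n) ℝ)
    (Z : Matrix (Fin n) (Fin n) ℝ) :
    ip (∑ i ∈ s, f i) Z = ∑ i ∈ s, ip (f i) Z := by
  simp [ip, Finset.sum_mul]

lemma sgn_sq (U : Finset (Fin n)) (i : Fin n) : sgn U i * sgn U i = 1 := by
  unfold sgn; split <;> norm_num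

lemma ip_stensor (W : Matrix (Fin n) (Fin n) ℝ) (U : Finset (Fin n)) :
    ip W (stensor U) = qform W (sgn U) := by
  simp only [ip, Matrix.trace, Matrix.diag, Matrix.mul_apply, stensor, qform]
  exact Finset.sum_congr rfl fun i _ => Finset.sum_congr rfl fun j _ => by ring

lemma ip_diag_stensor (x : Fin n → ℝ) (U : Finset (Fin n)) :
    ip (Matrix.diagonal x) (stensor U) = ∑ i, x i := by
  simp only [ip, Matrix.trace, Matrix.diag, Matrix.diagonal_mul, stensor]
  exact Finset.sum_congr rfl fun i _ => by rw [sgn_sq]; ring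

end Aux

/-- a β-certificate yields a β-pairing: under the conic assumptions,
if `(ρ, μ, U, y, x)` is a β-certificate for `(W, Z) ∈ K × K*`, then `⟨W,Z⟩ = ρμ` and
`βρμ ≤ maxq(W)·μ ≤ ρμ ≤ ρ·fevc(Z) ≤ (1/β)·ρμ`. -/
theorem certificate_implies_pairing {n k : ℕ} (hn : 1 ≤ n) (S : ConicSetting n k)
    (hS : S.Assumptions) (β : ℝ) (hβ0 : 0 < β) (hβ1 : β < 1)
    (W Z : Matrix (Fin n) (Fin n) ℝ) (hW : W ∈ S.K) (hZ : Z ∈ S.Kstar)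
    (ρ μ : ℝ) (U : Finset (Fin n)) (y : Finset (Fin n) → ℝ) (x : Fin n → ℝ)
    -- the β-certificate conditions:
    (hρ : 0 ≤ ρ) (hμ : 0 ≤ μ) (hρμ : ρ * μ = ip W Z)
    (hU : U ∈ S.FA) (hUval : β * ρ ≤ qform W (sgn U))
    (hy : S.CoverFeas Z y) (hysum : ∑ U' : Finset (Fin n), y U' ≤ μ / β)
    (hx : ∑ i, x i ≤ ρ) (hxW : Matrix.diagonal x - W ∈ dualSet S.A) :
    ip W Z = ρ * μ ∧
    β * (ρ * μ) ≤ S.maxq W * μ ∧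
    S.maxq W * μ ≤ ρ * μ ∧
    ρ * μ ≤ ρ * S.fevc Z ∧
    ρ * S.fevc Z ≤ (1 / β) * (ρ * μ) := by
  -- qform bound: for U' ∈ F(A), qform W (sgn U') ≤ ρ
  have qbound : ∀ U' ∈ S.FA, qform W (sgn U') ≤ ρ := by
    intro U' hU'
    have h1 : 0 ≤ ip (Matrix.diagonal x - W) (stensor U') := hxW.2 _ hU'
    rw [ip_sub_left, ip_diag_stensor] at h1
    rw [← ip_stensor]
    linarith
  -- the maxq set
  set Q : Set ℝ := {r | ∃ U' ∈ S.FA, r = qform W (sgn U')} with hQdef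
  have hQne : Q.Nonempty := ⟨qform W (sgn U), U, hU, rfl⟩
  have hQbdd : BddAbove Q := ⟨ρ, by rintro r ⟨U', hU', rfl⟩; exact qbound U' hU'⟩
  have hmaxq_le : S.maxq W ≤ ρ := csSup_le hQne (by rintro r ⟨U', hU', rfl⟩; exact qbound U' hU')
  have hmaxq_ge : β * ρ ≤ S.maxq W :=
    le_trans hUval (le_csSup hQbdd ⟨U, hU, rfl⟩)
  -- weak duality: for any cover y', ρ * μ ≤ ρ * ∑ y'
  have weak : ∀ y' : Finset (Fin n) → ℝ, S.CoverFeas Z y' →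
      ρ * μ ≤ ρ * ∑ U' : Finset (Fin n), y' U' := by
    intro y' hy'
    obtain ⟨hy'0, hy'supp, hlift⟩ := hy'
    obtain ⟨P, hP, Qm, hQm, hPQ⟩ := hlift
    have hPW : 0 ≤ ip P W := hP.2 W hW.1
    have hQW : ip Qm W = 0 := hQm.2 W (S.Khat_symm W hW.1) hW.2
    have h0 : 0 ≤ ip ((∑ U' : Finset (Fin n), y' U' • stensor U') - Z) W := by
      rw [hPQ, ip_add_left, hQW]; linarith
    rw [ip_sub_left, ip_sum_left] at h0
    have hterms : ∀ U' : Finset (Fin n),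
        ip (y' U' • stensor U') W ≤ ρ * y' U' := by
      intro U'
      rw [ip_smul_left, ip_comm, ip_stensor]
      by_cases hUF : U' ∈ S.FA
      · calc y' U' * qform W (sgn U') ≤ y' U' * ρ :=
              mul_le_mul_of_nonneg_left (qbound U' hUF) (hy'0 U')
          _ = ρ * y' U' := mul_comm _ _
      · rw [hy'supp U' hUF]; simp
    have hsum : ∑ U' : Finset (Fin n), ip (y' U' • stensor U') W
        ≤ ∑ U' : Finset (Fin n), ρ * y' U' :=
      Finset.sum_le_sum fun U' _ => hterms U'
    have hZW : ip Z W = ρ * μ := by rw [ip_comm]; exact hρμ.symm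
    rw [hZW] at h0
    rw [← Finset.mul_sum] at hsum
    linarith
  -- fevc set
  set Fv : Set ℝ := {r | ∃ y', S.CoverFeas Z y' ∧ r = ∑ U' : Finset (Fin n), y' U'} with hFv
  have hFvne : Fv.Nonempty := ⟨_, y, hy, rfl⟩
  have hFvbdd : BddBelow Fv := by
    refine ⟨0, ?_⟩
    rintro r ⟨y', hy', rfl⟩
    exact Finset.sum_nonneg fun U' _ => hy'.1 U'
  have hfevc_le : S.fevc Z ≤ μ / β := le_trans (csInf_le hFvbdd ⟨y, hy, rfl⟩) hysum
  have hfevc_ge : ρ * μ ≤ ρ * S.fevc Z := by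
    rcases eq_or_lt_of_le hρ with h | h
    · simp [← h]
    · have : μ ≤ S.fevc Z := by
        refine le_csInf hFvne ?_
        rintro r ⟨y', hy', rfl⟩
        have := weak y' hy'
        exact le_of_mul_le_mul_left (by linarith) h
      exact mul_le_mul_of_nonneg_left this hρ
  refine ⟨hρμ.symm, ?_, ?_, hfevc_ge, ?_⟩
  · calc β * (ρ * μ) = (β * ρ) * μ := by ring
      _ ≤ S.maxq W * μ := mul_le_mul_of_nonneg_right hmaxq_ge hμ
  · exact mul_le_mul_of_nonneg_right hmaxq_le hμ
  · calc ρ * S.fevc Z ≤ ρ * (μ / β) := mul_le_mul_of_nonneg_left hfevc_le hρ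
      _ = (1 / β) * (ρ * μ) := by field_simp
end
end

section
/- Primal gauge properties: under the conic assumptions, maxq and ν are positive definite monotone gauges on the cone K (with monotonicity with respect to the order W ⪯_K W' defined by W' − W ∈ K), and maxq(W) ≤ ν(W) for every W ∈ K. -/
open Matrix Finset

noncomputable section

/-- `φ` is a positive definite monotone gauge on the convex cone `C`:
nonnegative on `C`, `φ(0) = 0`, positively homogeneous, sublinear, positive on
nonzero points, and monotone for the order induced by `C`. -/
def IsPDMGauge {E : Type*} [AddCommGroup E] [Module ℝ E] (C : Set E) (φ : E → ℝ) : Prop :=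
  (∀ x ∈ C, 0 ≤ φ x) ∧
  φ 0 = 0 ∧
  (∀ c : ℝ, 0 ≤ c → ∀ x ∈ C, φ (c • x) = c * φ x) ∧
  (∀ x ∈ C, ∀ y ∈ C, φ (x + y) ≤ φ x + φ y) ∧
  (∀ x ∈ C, x ≠ 0 → 0 < φ x) ∧
  (∀ x ∈ C, ∀ y ∈ C, y - x ∈ C → φ x ≤ φ y)

/-!
Both `maxq` and `ν` are support functions `W ↦ sup {⟨W, Y⟩ : Y ∈ T}`: for `maxq` the set `T` is
the finite set of cut matrices `s_U s_Uᵀ`, `U ∈ F(A)`; for `ν` it is the unit-diagonal slice of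
`A`, which contains them and is bounded because `A ⊆ PSD(n)`. The support function of a nonempty
bounded set is positively homogeneous and subadditive, and it is monotone and nonnegative on any
cone that pairs nonnegatively with `T`, which `K ⊆ A*` provides. Definiteness: a `W ∈ K` with
`maxq W ≤ 0` is orthogonal to every cut matrix, hence to their cone; that cone has nonempty
interior in `Sym(n)`, so `W ⊥ Sym(n)` and `W = 0`. The same argument with `W = 1` shows
`F(A) ≠ ∅` once `n ≥ 1`.
-/

section SupportFunction

variable {E F : Type*} [AddCommGroup E] [Module ℝ E] [AddCommGroup F] [Module ℝ F]
  (B : E →ₗ[ℝ] F →ₗ[ℝ] ℝ) {T T' : Set F}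

def supportFn (T : Set F) (x : E) : ℝ := sSup (B x '' T)

variable {B}

theorem supportFn_zero (hT : T.Nonempty) : supportFn B T 0 = 0 := by
  simp [supportFn, hT.image_const]

theorem supportFn_smul {c : ℝ} (hc : 0 ≤ c) (x : E) :
    supportFn B T (c • x) = c * supportFn B T x := by
  rw [supportFn, supportFn, ← smul_eq_mul, ← Real.sSup_smul_of_nonneg hc, ← Set.image_smul,
    Set.image_image]
  simp

theorem le_supportFn {x : E} (hx : BddAbove (B x '' T)) {y : F} (hy : y ∈ T) :
    B x y ≤ supportFn B T x :=
  le_csSup hx (Set.mem_image_of_mem _ hy)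

theorem supportFn_le (hT : T.Nonempty) {x : E} {r : ℝ} (h : ∀ y ∈ T, B x y ≤ r) :
    supportFn B T x ≤ r :=
  csSup_le (hT.image _) (Set.forall_mem_image.2 h)

theorem supportFn_mono (hT : T.Nonempty) (hTT' : T ⊆ T') {x : E} (hx : BddAbove (B x '' T')) :
    supportFn B T x ≤ supportFn B T' x :=
  supportFn_le hT fun _ hy => le_supportFn hx (hTT' hy)

theorem isPDMGauge_supportFn {C : Set E} (hT : T.Nonempty)
    (hbdd : ∀ x ∈ C, BddAbove (B x '' T)) (hC : ∀ x ∈ C, ∀ y ∈ T, 0 ≤ B x y)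
    (hsep : ∀ x ∈ C, (∀ y ∈ T, B x y = 0) → x = 0) : IsPDMGauge C (supportFn B T) := by
  obtain ⟨y₀, hy₀⟩ := hT
  refine ⟨fun x hx => (hC x hx y₀ hy₀).trans (le_supportFn (hbdd x hx) hy₀),
    supportFn_zero ⟨y₀, hy₀⟩, fun c hc x _ => supportFn_smul hc x,
    fun x hx x' hx' => ?_, fun x hx hx0 => ?_, fun x hx x' hx' hsub => ?_⟩
  · refine supportFn_le ⟨y₀, hy₀⟩ fun y hy => ?_
    rw [map_add, LinearMap.add_apply]
    exact add_le_add (le_supportFn (hbdd x hx) hy) (le_supportFn (hbdd x' hx') hy)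
  · by_contra! hle
    exact hx0 <| hsep x hx fun y hy =>
      le_antisymm ((le_supportFn (hbdd x hx) hy).trans hle) (hC x hx y hy)
  · refine supportFn_le ⟨y₀, hy₀⟩ fun y hy => ?_
    have hpair := hC _ hsub y hy
    rw [map_sub, LinearMap.sub_apply, sub_nonneg] at hpair
    exact hpair.trans (le_supportFn (hbdd x' hx') hy)

end SupportFunction

theorem Matrix.PosSemidef.two_mul_abs_apply_le {ι : Type*} [Fintype ι] [DecidableEq ι]
    {M : Matrix ι ι ℝ} (hM : M.PosSemidef) (i j : ι) : 2 * |M i j| ≤ M i i + M j j := by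
  have hsymm : M j i = M i j := by simpa using congrFun (congrFun hM.1 i) j
  have hform : ∀ c : ℝ, 0 ≤ M i i + 2 * c * M i j + M j j * c ^ 2 := fun c => by
    have h := hM.dotProduct_mulVec_nonneg (Pi.single i 1 + Pi.single j c)
    simp [Matrix.mulVec_add, add_dotProduct, dotProduct_add, hsymm] at h
    linarith
  have h1 := hform 1
  have h2 := hform (-1)
  rcases abs_cases (M i j) with ⟨h, _⟩ | ⟨h, _⟩ <;> rw [h] <;> linarith

section Matrices

open Topology

def ipBilin {n : ℕ} : Matrix (Fin n) (Fin n) ℝ →ₗ[ℝ] Matrix (Fin n) (Fin n) ℝ →ₗ[ℝ] ℝ :=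
  (LinearMap.mul ℝ _).compr₂ (Matrix.traceLinearMap _ ℝ ℝ)

@[simp] theorem ipBilin_apply {n : ℕ} (X Y : Matrix (Fin n) (Fin n) ℝ) :
    ipBilin X Y = ip X Y :=
  rfl

variable {n : ℕ}

theorem eq_zero_of_ip_self_eq_zero {W : Matrix (Fin n) (Fin n) ℝ} (hW : W.IsSymm)
    (h : ip W W = 0) : W = 0 := by
  rw [ip] at h
  nth_rewrite 1 [← hW, ← Matrix.conjTranspose_eq_transpose_of_trivial] at h
  exact Matrix.trace_conjTranspose_mul_self_eq_zero_iff.1 h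

theorem exists_ne_zero_add_smul_mem_of_mem_interior
    {s : Set {M : Matrix (Fin n) (Fin n) ℝ // M.IsSymm}}
    {X : {M : Matrix (Fin n) (Fin n) ℝ // M.IsSymm}} (hX : X ∈ interior s)
    {Y : Matrix (Fin n) (Fin n) ℝ} (hY : Y.IsSymm) :
    ∃ t : ℝ, t ≠ 0 ∧ ∃ Z ∈ s, (Z : Matrix (Fin n) (Fin n) ℝ) = X + t • Y := by
  let line : ℝ → {M : Matrix (Fin n) (Fin n) ℝ // M.IsSymm} :=
    fun t => ⟨X + t • Y, X.2.add (hY.smul t)⟩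
  have hline : Continuous line := by fun_prop
  have hnhds : ∀ᶠ t in 𝓝[≠] (0 : ℝ), line t ∈ s :=
    eventually_nhdsWithin_of_eventually_nhds <| hline.continuousAt.eventually_mem <| by
      simpa [line] using mem_interior_iff_mem_nhds.1 hX
  obtain ⟨t, hts, ht⟩ := (hnhds.and self_mem_nhdsWithin).exists
  exact ⟨t, ht, line t, hts, rfl⟩

theorem eq_zero_of_ip_eq_zero_of_interior_nonempty
    {s : Set {M : Matrix (Fin n) (Fin n) ℝ // M.IsSymm}} (hs : (interior s).Nonempty)
    {W : Matrix (Fin n) (Fin n) ℝ} (hW : W.IsSymm) (h : ∀ X ∈ s, ip W X = 0) : W = 0 := by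
  obtain ⟨X, hX⟩ := hs
  refine eq_zero_of_ip_self_eq_zero hW ?_
  obtain ⟨t, ht, Z, hZ, hZX⟩ := exists_ne_zero_add_smul_mem_of_mem_interior hX hW
  have hline : ip W X + t * ip W W = 0 := by
    simpa [ip, hZX, Matrix.mul_add] using h Z hZ
  rw [h X (interior_subset hX), zero_add] at hline
  exact (mul_eq_zero.1 hline).resolve_left ht

theorem qform_sgn_eq_ip (W : Matrix (Fin n) (Fin n) ℝ) (U : Finset (Fin n)) :
    qform W (sgn U) = ip W (stensor U) := by
  simp only [qform, ip, Matrix.trace, Matrix.diag, Matrix.mul_apply, stensor]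
  exact Finset.sum_congr rfl fun i _ => Finset.sum_congr rfl fun j _ => by ring

theorem stensor_apply_self (U : Finset (Fin n)) (i : Fin n) : stensor U i i = 1 := by
  by_cases hi : i ∈ U <;> simp [stensor, sgn, hi]

theorem bddAbove_ip_image_posSemidef_diag_eq_one (W : Matrix (Fin n) (Fin n) ℝ) :
    BddAbove (ip W '' {Y | Y.PosSemidef ∧ ∀ i, Y i i = 1}) := by
  refine ⟨∑ i, ∑ j, |W i j|, Set.forall_mem_image.2 fun Y ⟨hY, hdiag⟩ => ?_⟩
  have hentry : ∀ i j, |Y i j| ≤ 1 := fun i j => by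
    linarith [hY.two_mul_abs_apply_le i j, hdiag i, hdiag j]
  simp only [ip, Matrix.trace, Matrix.diag, Matrix.mul_apply]
  refine Finset.sum_le_sum fun i _ => Finset.sum_le_sum fun j _ => ?_
  calc W i j * Y j i ≤ |W i j| * |Y j i| := (le_abs_self _).trans (abs_mul _ _).le
    _ ≤ |W i j| := mul_le_of_le_one_right (abs_nonneg _) (hentry j i)

end Matrices

namespace ConicSetting

variable {n k : ℕ} (S : ConicSetting n k)

theorem ip_eq_zero_of_mem_coneCUT {W : Matrix (Fin n) (Fin n) ℝ}
    (h : ∀ U ∈ S.FA, ip W (stensor U) = 0) {X : Matrix (Fin n) (Fin n) ℝ} (hX : X ∈ S.coneCUT) :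
    ip W X = 0 := by
  obtain ⟨y, -, hy, rfl⟩ := hX
  rw [← ipBilin_apply, map_sum]
  refine Finset.sum_eq_zero fun U _ => ?_
  by_cases hU : U ∈ S.FA
  · simp [h U hU]
  · simp [hy U hU, ip]

-- For `A = PSD(n)` this is the elliptope.
def elliptope : Set (Matrix (Fin n) (Fin n) ℝ) := {Y | Y ∈ S.A ∧ ∀ i, Y i i = 1}

theorem stensor_image_FA_subset_elliptope : stensor '' S.FA ⊆ S.elliptope :=
  Set.image_subset_iff.2 fun U hU => ⟨hU, stensor_apply_self U⟩

theorem maxq_eq_supportFn : S.maxq = supportFn ipBilin (stensor '' S.FA) := by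
  ext W
  simp only [maxq, supportFn, Set.image_image, ipBilin_apply, ← qform_sgn_eq_ip]
  congr 1
  ext r
  simp [eq_comm]

theorem nu_eq_supportFn : S.nu = supportFn ipBilin S.elliptope := by
  ext W
  simp only [nu, supportFn, ipBilin_apply]
  congr 1
  ext r
  simp [elliptope, eq_comm, and_assoc]

namespace Assumptions

variable {S} (hS : S.Assumptions)
include hS

theorem eq_zero_of_ip_stensor_eq_zero {W : Matrix (Fin n) (Fin n) ℝ} (hW : W.IsSymm)
    (h : ∀ U ∈ S.FA, ip W (stensor U) = 0) : W = 0 :=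
  eq_zero_of_ip_eq_zero_of_interior_nonempty hS.cut_interior hW
    fun _ => S.ip_eq_zero_of_mem_coneCUT h

theorem FA_nonempty (hn : 1 ≤ n) : S.FA.Nonempty := by
  have : Nonempty (Fin n) := ⟨⟨0, hn⟩⟩
  by_contra hempty
  rw [Set.not_nonempty_iff_eq_empty] at hempty
  exact one_ne_zero <| hS.eq_zero_of_ip_stensor_eq_zero Matrix.isSymm_one (by simp [hempty])

theorem bddAbove_ip_image_elliptope (W : Matrix (Fin n) (Fin n) ℝ) :
    BddAbove (ipBilin W '' S.elliptope) :=
  (bddAbove_ip_image_posSemidef_diag_eq_one W).mono <|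
    Set.image_mono fun Y hY => show Y.PosSemidef ∧ _ from ⟨hS.A_psd Y hY.1, hY.2⟩

end Assumptions

end ConicSetting

/-- primal gauge properties: under the conic assumptions, `maxq` and
`ν` are positive definite monotone gauges on `K`, and `maxq ≤ ν` on `K`. -/
theorem primal_gauge_properties {n k : ℕ} (hn : 1 ≤ n) (S : ConicSetting n k)
    (hS : S.Assumptions) :
    IsPDMGauge S.K S.maxq ∧ IsPDMGauge S.K S.nu ∧ ∀ W ∈ S.K, S.maxq W ≤ S.nu W := by
  have hcuts : (stensor '' S.FA).Nonempty := (hS.FA_nonempty hn).image stensor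
  have hdual : ∀ W ∈ S.K, ∀ Y ∈ S.A, 0 ≤ ip W Y := fun W hW => (hS.K_sub_Astar hW).2
  have hsep : ∀ W ∈ S.K, (∀ Y ∈ stensor '' S.FA, ip W Y = 0) → W = 0 := fun W hW h =>
    hS.eq_zero_of_ip_stensor_eq_zero (S.Khat_symm W hW.1) fun U hU => h _ ⟨U, hU, rfl⟩
  have hsub := S.stensor_image_FA_subset_elliptope
  rw [S.maxq_eq_supportFn, S.nu_eq_supportFn]
  refine ⟨isPDMGauge_supportFn hcuts (fun W _ => ?_)
      (fun W hW Y hY => hdual W hW Y (hsub hY).1) hsep,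
    isPDMGauge_supportFn (hcuts.mono hsub) (fun W _ => hS.bddAbove_ip_image_elliptope W)
      (fun W hW Y hY => hdual W hW Y hY.1) fun W hW h => hsep W hW fun Y hY => h Y (hsub hY),
    fun W _ => supportFn_mono hcuts hsub (hS.bddAbove_ip_image_elliptope W)⟩
  exact ((S.FA.toFinite.image _).image _).bddAbove
end
end
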